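/- arXiv:1907.06050 — 2 statements merged into one kernel-verified Lean document; each statement's English description precedes it below -/
import Mathlib

section
/- Let α ≥ 1 and β ≥ 0 be real numbers and let m be an integer with m > α + β - 1. Then m belongs to the inhomogeneous Beatty set B(α, β) = {⌊nα + β⌋ : n ∈ ℕ, n ≥ 1} if and only if (m - β)/α mod 1 lies in (-1/α, 0] mod 1. -/
/-! With `n` ranging over all integers, `⌊nα + β⌋ = m` is equivalent to `m - β ≤ nα < m - β + 1`,
which after division by `α` is the stated condition on `(m - β)/α` with `k = n`. The bound
`m > α + β - 1` forces any such `n` to be positive, because `α ≥ 1`. -/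

theorem Int.floor_mul_add_eq_iff {α : ℝ} (hα : 0 < α) (β : ℝ) (k m : ℤ) :
    ⌊(k : ℝ) * α + β⌋ = m ↔
      -1 / α < ((m : ℝ) - β) / α - k ∧ ((m : ℝ) - β) / α - k ≤ 0 := by
  have hshift : ((m : ℝ) - β) / α - k = ((m : ℝ) - β - k * α) / α := by
    field_simp
  rw [Int.floor_eq_iff, hshift, div_lt_div_iff_of_pos_right hα, div_nonpos_iff]
  constructor
  · rintro ⟨hle, hlt⟩
    exact ⟨by linarith, Or.inr ⟨by linarith, hα.le⟩⟩
  · rintro ⟨hlt, (⟨-, hα'⟩ | ⟨hle, -⟩)⟩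
    · exact absurd hα' hα.not_ge
    · exact ⟨by linarith, by linarith⟩

theorem Int.one_le_of_sub_one_lt_mul {α : ℝ} (hα : 1 ≤ α) {k : ℤ} (hk : α - 1 < k * α) :
    1 ≤ k := by
  by_contra! hk0
  have : (k : ℝ) * α ≤ 0 :=
    mul_nonpos_of_nonpos_of_nonneg (by exact_mod_cast Int.lt_add_one_iff.mp hk0) (by linarith)
  linarith

theorem inhomogeneous_beatty_membership_general (α β : ℝ) (hα : 1 ≤ α)
    (m : ℤ) (hm : (m : ℝ) > α + β - 1) :
    (∃ n : ℕ, 1 ≤ n ∧ m = ⌊(n : ℝ) * α + β⌋) ↔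
      ∃ k : ℤ, -1 / α < ((m : ℝ) - β) / α - (k : ℝ) ∧ ((m : ℝ) - β) / α - (k : ℝ) ≤ 0 := by
  have hα0 : 0 < α := one_pos.trans_le hα
  constructor
  · rintro ⟨n, -, rfl⟩
    exact ⟨n, (Int.floor_mul_add_eq_iff hα0 β n _).1 (by rw [Int.cast_natCast])⟩
  · rintro ⟨k, hk⟩
    have hfloor := (Int.floor_mul_add_eq_iff hα0 β k m).2 hk
    have hk1 : 1 ≤ k := Int.one_le_of_sub_one_lt_mul hα <| by
      linarith [hfloor ▸ Int.floor_le ((k : ℝ) * α + β)]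
    lift k to ℕ using by omega
    exact ⟨k, by exact_mod_cast hk1, by rw [← hfloor, Int.cast_natCast]⟩

/-- Inhomogeneous Beatty membership criterion: for `α ≥ 1`, `β ≥ 0` and an integer
`m > α + β - 1`, `m ∈ B(α,β) = {⌊nα + β⌋ : n ≥ 1}` iff `(m-β)/α ∈ (-1/α, 0] (mod 1)`. -/
theorem inhomogeneous_beatty_membership (α β : ℝ) (hα : 1 ≤ α) (hβ : 0 ≤ β)
    (m : ℤ) (hm : (m : ℝ) > α + β - 1) :
    (∃ n : ℕ, 1 ≤ n ∧ m = ⌊(n : ℝ) * α + β⌋) ↔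
      ∃ k : ℤ, -1 / α < ((m : ℝ) - β) / α - (k : ℝ) ∧ ((m : ℝ) - β) / α - (k : ℝ) ≤ 0 :=
  inhomogeneous_beatty_membership_general α β hα m hm
end

section
/- Let λ ∈ (0,1) be irrational and let ψ(t) = t - ⌊t⌋ - 1/2. Then (1/x) · Σ_{1 ≤ m ≤ x} (ψ(mλ) - ψ((m+1)λ))² converges to λ(1 - λ) as x → ∞. -/
/-!
The difference `ψ((m+1)λ) - ψ(mλ)` is `λ - d_m` with `d_m = ⌊(m+1)λ⌋ - ⌊mλ⌋ ∈ {0, 1}`, so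
`d_m ^ 2 = d_m` makes its square equal to `λ(1-λ) - (1-2λ)(ψ((m+1)λ) - ψ(mλ))`. The last term
telescopes to a difference of two values of the bounded function `ψ`, so its average is `O(1/x)`.
-/

open Filter

section FloorRing

variable {R : Type*} [CommRing R] [LinearOrder R] [IsStrictOrderedRing R] [FloorRing R]

theorem Int.floor_add_sub_floor_eq_zero_or_one (t : R) {l : R} (hl0 : 0 ≤ l) (hl1 : l ≤ 1) :
    ⌊t + l⌋ - ⌊t⌋ = 0 ∨ ⌊t + l⌋ - ⌊t⌋ = 1 := by
  have hlo : ⌊t⌋ ≤ ⌊t + l⌋ := Int.floor_mono (by linarith)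
  have hhi : ⌊t + l⌋ ≤ ⌊t⌋ + 1 := Int.floor_add_one t ▸ Int.floor_mono (by linarith)
  omega

theorem Int.sq_fract_add_sub_fract (t : R) {l : R} (hl0 : 0 ≤ l) (hl1 : l ≤ 1) :
    (Int.fract (t + l) - Int.fract t) ^ 2
      = l * (1 - l) - (1 - 2 * l) * (Int.fract (t + l) - Int.fract t) := by
  have hdiff : Int.fract (t + l) - Int.fract t = l - ((⌊t + l⌋ - ⌊t⌋ : ℤ) : R) := by
    simp only [Int.fract, Int.cast_sub]; ring
  rw [hdiff]
  rcases Int.floor_add_sub_floor_eq_zero_or_one t hl0 hl1 with hd | hd <;>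
    · rw [hd]; push_cast; ring

end FloorRing

theorem tendsto_inv_mul_sum_Icc_sub_of_abs_le {f : ℕ → ℝ} {C : ℝ} (hf : ∀ m, |f m| ≤ C) :
    Tendsto (fun x : ℕ => (1 / (x : ℝ)) * ∑ m ∈ Finset.Icc 1 x, (f (m + 1) - f m))
      atTop (nhds 0) := by
  have hbdd : IsBoundedUnder (· ≤ ·) atTop fun x : ℕ => ‖f (x + 1) - f 1‖ :=
    isBoundedUnder_of_eventually_le (a := C + C) <| .of_forall fun x =>
      (norm_sub_le _ _).trans (add_le_add (hf _) (hf _))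
  refine (tendsto_one_div_atTop_nhds_zero_nat.zero_mul_isBoundedUnder_le hbdd).congr' ?_
  filter_upwards [eventually_ge_atTop 1] with x hx
  rw [Finset.sum_Icc_sub hx]

open Filter in
theorem sawtooth_variance_limit_general (l : ℝ) (h0 : 0 < l) (h1 : l < 1) :
    Tendsto (fun x : ℕ =>
        (1 / (x : ℝ)) * ∑ m ∈ Finset.Icc 1 x,
          (((m : ℝ) * l - ⌊(m : ℝ) * l⌋ - 1 / 2)
            - (((m : ℝ) + 1) * l - ⌊((m : ℝ) + 1) * l⌋ - 1 / 2)) ^ 2)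
      atTop (nhds (l * (1 - l))) := by
  set f : ℕ → ℝ := fun m => Int.fract (m * l)
  have hf : ∀ m, |f m| ≤ 1 := fun m =>
    (abs_of_nonneg (Int.fract_nonneg _)).trans_le (Int.fract_lt_one _).le
  have hterm (m : ℕ) : (((m : ℝ) * l - ⌊(m : ℝ) * l⌋ - 1 / 2)
      - (((m : ℝ) + 1) * l - ⌊((m : ℝ) + 1) * l⌋ - 1 / 2)) ^ 2
      = l * (1 - l) - (1 - 2 * l) * (f (m + 1) - f m) := by
    simp only [f, Nat.cast_add, Nat.cast_one, add_one_mul]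
    rw [← Int.sq_fract_add_sub_fract _ h0.le h1.le, Int.fract, Int.fract]
    ring
  have havg : ∀ᶠ x : ℕ in atTop, l * (1 - l) - (1 - 2 * l) *
      ((1 / (x : ℝ)) * ∑ m ∈ Finset.Icc 1 x, (f (m + 1) - f m)) = (1 / (x : ℝ)) *
        ∑ m ∈ Finset.Icc 1 x, (((m : ℝ) * l - ⌊(m : ℝ) * l⌋ - 1 / 2)
          - (((m : ℝ) + 1) * l - ⌊((m : ℝ) + 1) * l⌋ - 1 / 2)) ^ 2 := by
    filter_upwards [eventually_ge_atTop 1] with x hx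
    have hx0 : (x : ℝ) ≠ 0 := by positivity
    simp only [hterm, Finset.sum_sub_distrib, ← Finset.mul_sum, Finset.sum_const,
      Nat.card_Icc, add_tsub_cancel_right, nsmul_eq_mul]
    field_simp
  simpa using (((tendsto_inv_mul_sum_Icc_sub_of_abs_le hf).const_mul (1 - 2 * l)).const_sub
    (l * (1 - l))).congr' havg

open Filter in
/-- For irrational `λ ∈ (0,1)`, the average `(1/x) Σ_{1 ≤ m ≤ x} (ψ(mλ) - ψ((m+1)λ))²`
converges to `λ(1-λ)`, where `ψ(t) = t - ⌊t⌋ - 1/2`. -/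
theorem sawtooth_variance_limit (l : ℝ) (h0 : 0 < l) (h1 : l < 1) (hirr : Irrational l) :
    Tendsto (fun x : ℕ =>
        (1 / (x : ℝ)) * ∑ m ∈ Finset.Icc 1 x,
          (((m : ℝ) * l - ⌊(m : ℝ) * l⌋ - 1 / 2)
            - (((m : ℝ) + 1) * l - ⌊((m : ℝ) + 1) * l⌋ - 1 / 2)) ^ 2)
      atTop (nhds (l * (1 - l))) :=
  sawtooth_variance_limit_general l h0 h1
end
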